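/- Let U be an n×n unitary matrix and let α, β ⊆ {1,...,n} with |α| = |β|. Then |det(U(α,β))| = |det(U(J\α, J\β))| where J = {1,...,n}. -/

import Mathlib

/-! Splitting the rows of `Fin n` along `α` and the columns along `β` turns `U` into a unitary
block matrix `[[A, B], [C, D]]` with `A = U(α, β)` and `D = U(αᶜ, βᶜ)`. Multiplying it on the
right by the block-triangular `[[Aᴴ, 0], [Bᴴ, 1]]` gives the block-triangular `[[1, B], [0, D]]`,
so `det D = det U · conj (det A)`, and `|det U| = 1`. -/

open Matrix

namespace Matrix

variable {m k R : Type*} [Fintype m] [Fintype k] [DecidableEq m] [DecidableEq k]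
  [CommRing R] [StarRing R]

theorem det_toBlocks₂₂_of_mul_conjTranspose_eq_one {B : Matrix (m ⊕ k) (m ⊕ k) R}
    (hB : B * Bᴴ = 1) : B.toBlocks₂₂.det = B.det * star B.toBlocks₁₁.det := by
  have hblocks := hB
  rw [← fromBlocks_toBlocks B, fromBlocks_conjTranspose, fromBlocks_multiply, ← fromBlocks_one,
    fromBlocks_inj] at hblocks
  obtain ⟨h₁₁, -, h₂₁, -⟩ := hblocks
  have hprod : B * fromBlocks B.toBlocks₁₁ᴴ 0 B.toBlocks₁₂ᴴ 1 =
      fromBlocks 1 B.toBlocks₁₂ 0 B.toBlocks₂₂ := by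
    conv_lhs => rw [← fromBlocks_toBlocks B]
    rw [fromBlocks_multiply]
    simp [h₁₁, h₂₁]
  simpa [det_fromBlocks_zero₁₂, det_fromBlocks_zero₂₁, det_conjTranspose] using
    (congrArg det hprod).symm

theorem submatrix_mem_unitaryGroup {n ι : Type*} [Fintype n] [DecidableEq n] [Fintype ι]
    [DecidableEq ι] {U : Matrix n n R} (hU : U ∈ unitaryGroup n R) (e f : ι ≃ n) :
    U.submatrix e f ∈ unitaryGroup ι R := by
  rw [mem_unitaryGroup_iff, star_eq_conjTranspose, conjTranspose_submatrix, submatrix_mul_equiv,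
    ← star_eq_conjTranspose, mem_unitaryGroup_iff.mp hU, submatrix_one_equiv]

theorem norm_det_toBlocks₁₁_eq_norm_det_toBlocks₂₂ {𝕜 : Type*} [RCLike 𝕜]
    {B : Matrix (m ⊕ k) (m ⊕ k) 𝕜} (hB : B ∈ unitaryGroup (m ⊕ k) 𝕜) :
    ‖B.toBlocks₁₁.det‖ = ‖B.toBlocks₂₂.det‖ := by
  have hdet : ‖B.det‖ = 1 := CStarRing.norm_of_mem_unitary (det_of_mem_unitary hB)
  have hBB : B * Bᴴ = 1 := mem_unitaryGroup_iff.mp hB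
  rw [det_toBlocks₂₂_of_mul_conjTranspose_eq_one hBB, norm_mul, hdet, one_mul, norm_star]

end Matrix

def Finset.finSumComplEquiv {α : Type*} [Fintype α] [LinearOrder α] {m k : ℕ} (s : Finset α)
    (hs : s.card = m) (hsc : sᶜ.card = k) : Fin m ⊕ Fin k ≃ α :=
  (Equiv.sumCongr (s.orderIsoOfFin hs).toEquiv
    ((sᶜ.orderIsoOfFin hsc).toEquiv.trans
      (Equiv.subtypeEquivRight fun _ => Finset.mem_compl))).trans (Equiv.sumCompl (· ∈ s))

theorem stmt_2 {n m : ℕ} (U : Matrix (Fin n) (Fin n) ℂ)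
    (hU : U ∈ Matrix.unitaryGroup (Fin n) ℂ) (α β : Finset (Fin n))
    (hα : α.card = m) (hβ : β.card = m) :
    Norm.norm (Matrix.det (U.submatrix
        (fun i : Fin m => ((α.orderIsoOfFin hα i : {x // x ∈ α}) : Fin n))
        (fun j : Fin m => ((β.orderIsoOfFin hβ j : {x // x ∈ β}) : Fin n)))) =
    Norm.norm (Matrix.det (U.submatrix
        (fun i : Fin (n - m) =>
          ((αᶜ.orderIsoOfFin (by rw [Finset.card_compl, hα, Fintype.card_fin]) i :
            {x // x ∈ αᶜ}) : Fin n))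
        (fun j : Fin (n - m) =>
          ((βᶜ.orderIsoOfFin (by rw [Finset.card_compl, hβ, Fintype.card_fin]) j :
            {x // x ∈ βᶜ}) : Fin n)))) := by
  have hαc : αᶜ.card = n - m := by rw [Finset.card_compl, hα, Fintype.card_fin]
  have hβc : βᶜ.card = n - m := by rw [Finset.card_compl, hβ, Fintype.card_fin]
  -- Both submatrices are, definitionally, diagonal blocks of `U` reindexed along `α ⊕ αᶜ`
  -- and `β ⊕ βᶜ`.
  exact norm_det_toBlocks₁₁_eq_norm_det_toBlocks₂₂ <|
    submatrix_mem_unitaryGroup hU (α.finSumComplEquiv hα hαc) (β.finSumComplEquiv hβ hβc)
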